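/- Let n ≥ 6 be even and let ρ: G_n → PU(1,1) be a representation. Then for all negative p, q ∈ W, Area_n(p, q; ρ) = Area_1(w₁·q, p; ρ), i.e., Area_n(p, q; ρ) = Area_n(ρ(w₁)·q, p; ρ∘S), where w₁ = r₁r_n. -/

import Mathlib

noncomputable section
open Matrix Complex
namespace HView

abbrev W : Type := Fin 2 → ℂ

def herm (x y : W) : ℂ := x 0 * (starRingEnd ℂ) (y 0) - x 1 * (starRingEnd ℂ) (y 1)

def IsNeg (p : W) : Prop := p ≠ 0 ∧ (herm p p).re < 0
def IsIso (p : W) : Prop := p ≠ 0 ∧ herm p p = 0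
def IsNonpos (p : W) : Prop := p ≠ 0 ∧ (herm p p).re ≤ 0

def triArea (p₁ p₂ p₃ : W) : ℝ :=
  2 * Complex.arg (-(herm p₁ p₂ * herm p₂ p₃ * herm p₃ p₁))

def Jm : Matrix (Fin 2) (Fin 2) ℂ := !![1, 0; 0, -1]

def SU11 : Subgroup (SpecialLinearGroup (Fin 2) ℂ) where
  carrier := {A | (A : Matrix (Fin 2) (Fin 2) ℂ)ᴴ * Jm * (A : Matrix (Fin 2) (Fin 2) ℂ) = Jm}
  one_mem' := by simp
  mul_mem' := by
    intro A B hA hB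
    simp only [Set.mem_setOf_eq] at hA hB ⊢
    have hco : ((A * B : SpecialLinearGroup (Fin 2) ℂ) : Matrix (Fin 2) (Fin 2) ℂ)
        = (A : Matrix (Fin 2) (Fin 2) ℂ) * (B : Matrix (Fin 2) (Fin 2) ℂ) := rfl
    rw [hco, conjTranspose_mul]
    calc (B : Matrix (Fin 2) (Fin 2) ℂ)ᴴ * (A : Matrix (Fin 2) (Fin 2) ℂ)ᴴ * Jm *
          ((A : Matrix (Fin 2) (Fin 2) ℂ) * (B : Matrix (Fin 2) (Fin 2) ℂ))
        = (B : Matrix (Fin 2) (Fin 2) ℂ)ᴴ *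
          ((A : Matrix (Fin 2) (Fin 2) ℂ)ᴴ * Jm * (A : Matrix (Fin 2) (Fin 2) ℂ)) *
          (B : Matrix (Fin 2) (Fin 2) ℂ) := by noncomm_ring
      _ = Jm := by rw [hA]; exact hB
  inv_mem' := by
    intro A hA
    simp only [Set.mem_setOf_eq] at hA ⊢
    have h1 : (A : Matrix (Fin 2) (Fin 2) ℂ) *
        ((A⁻¹ : SpecialLinearGroup (Fin 2) ℂ) : Matrix (Fin 2) (Fin 2) ℂ) = 1 := by
      rw [← Matrix.SpecialLinearGroup.coe_mul, mul_inv_cancel,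
        Matrix.SpecialLinearGroup.coe_one]
    have h2 : ((A⁻¹ : SpecialLinearGroup (Fin 2) ℂ) : Matrix (Fin 2) (Fin 2) ℂ)ᴴ *
        (A : Matrix (Fin 2) (Fin 2) ℂ)ᴴ = 1 := by
      rw [← conjTranspose_mul, h1, conjTranspose_one]
    calc ((A⁻¹ : SpecialLinearGroup (Fin 2) ℂ) : Matrix (Fin 2) (Fin 2) ℂ)ᴴ * Jm *
          ((A⁻¹ : SpecialLinearGroup (Fin 2) ℂ) : Matrix (Fin 2) (Fin 2) ℂ)
        = ((A⁻¹ : SpecialLinearGroup (Fin 2) ℂ) : Matrix (Fin 2) (Fin 2) ℂ)ᴴ *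
          ((A : Matrix (Fin 2) (Fin 2) ℂ)ᴴ * Jm * (A : Matrix (Fin 2) (Fin 2) ℂ)) *
          ((A⁻¹ : SpecialLinearGroup (Fin 2) ℂ) : Matrix (Fin 2) (Fin 2) ℂ) := by rw [hA]
      _ = (((A⁻¹ : SpecialLinearGroup (Fin 2) ℂ) : Matrix (Fin 2) (Fin 2) ℂ)ᴴ *
            (A : Matrix (Fin 2) (Fin 2) ℂ)ᴴ) * Jm *
          ((A : Matrix (Fin 2) (Fin 2) ℂ) *
            ((A⁻¹ : SpecialLinearGroup (Fin 2) ℂ) : Matrix (Fin 2) (Fin 2) ℂ)) := by noncomm_ring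
      _ = Jm := by rw [h1, h2, one_mul, mul_one]


instance : Fact (Even (Fintype.card (Fin 2))) := ⟨by decide⟩

def negOne : SU11 := ⟨-1, by
  show ((-1 : SpecialLinearGroup (Fin 2) ℂ) : Matrix (Fin 2) (Fin 2) ℂ)ᴴ * Jm *
    ((-1 : SpecialLinearGroup (Fin 2) ℂ) : Matrix (Fin 2) (Fin 2) ℂ) = Jm
  simp⟩

lemma negOne_mul_negOne : negOne * negOne = 1 := by
  apply Subtype.ext
  show ((-1 : SpecialLinearGroup (Fin 2) ℂ)) * (-1) = 1
  apply Subtype.ext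
  show ((-1 : Matrix (Fin 2) (Fin 2) ℂ)) * (-1) = 1
  simp

lemma negOne_central (g : SU11) : g * negOne = negOne * g := by
  apply Subtype.ext
  apply Subtype.ext
  show ((g : SpecialLinearGroup (Fin 2) ℂ) : Matrix (Fin 2) (Fin 2) ℂ) * (-1)
      = (-1) * ((g : SpecialLinearGroup (Fin 2) ℂ) : Matrix (Fin 2) (Fin 2) ℂ)
  simp

def pm1 : Subgroup SU11 where
  carrier := {1, negOne}
  one_mem' := Or.inl rfl
  mul_mem' := by
    rintro a b (rfl | ha) (rfl | hb)
    · exact Or.inl (one_mul 1)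
    · rw [Set.mem_singleton_iff] at hb; subst hb
      exact Or.inr (by rw [one_mul]; rfl)
    · rw [Set.mem_singleton_iff] at ha; subst ha
      exact Or.inr (by rw [mul_one]; rfl)
    · rw [Set.mem_singleton_iff] at ha hb; subst ha; subst hb
      exact Or.inl negOne_mul_negOne
  inv_mem' := by
    rintro a (rfl | ha)
    · exact Or.inl inv_one
    · rw [Set.mem_singleton_iff] at ha; subst ha
      refine Or.inr ?_
      rw [Set.mem_singleton_iff, inv_eq_iff_mul_eq_one, negOne_mul_negOne]

instance pm1_normal : pm1.Normal := by
  constructor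
  intro x hx g
  rcases hx with rfl | hx
  · simpa using pm1.one_mem
  · rw [Set.mem_singleton_iff] at hx; subst hx
    have h : g * negOne * g⁻¹ = negOne := by
      rw [negOne_central, mul_assoc, mul_inv_cancel, mul_one]
    rw [h]
    exact Or.inr rfl

abbrev PU11 := SU11 ⧸ pm1

def mobius (A : SU11) (z : ℂ) : ℂ :=
  (((A : SpecialLinearGroup (Fin 2) ℂ) : Matrix (Fin 2) (Fin 2) ℂ) 0 0 * z +
    ((A : SpecialLinearGroup (Fin 2) ℂ) : Matrix (Fin 2) (Fin 2) ℂ) 0 1) /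
  (((A : SpecialLinearGroup (Fin 2) ℂ) : Matrix (Fin 2) (Fin 2) ℂ) 1 0 * z +
    ((A : SpecialLinearGroup (Fin 2) ℂ) : Matrix (Fin 2) (Fin 2) ℂ) 1 1)

lemma mobius_mul_negOne (A : SU11) (z : ℂ) : mobius (A * negOne) z = mobius A z := by
  have hm : (((A * negOne : SU11) : SpecialLinearGroup (Fin 2) ℂ) : Matrix (Fin 2) (Fin 2) ℂ)
      = -(((A : SpecialLinearGroup (Fin 2) ℂ) : Matrix (Fin 2) (Fin 2) ℂ)) := by
    show ((A : SpecialLinearGroup (Fin 2) ℂ) : Matrix (Fin 2) (Fin 2) ℂ) *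
      (-1 : Matrix (Fin 2) (Fin 2) ℂ) = _
    simp
  set M := ((A : SpecialLinearGroup (Fin 2) ℂ) : Matrix (Fin 2) (Fin 2) ℂ) with hM
  unfold mobius
  rw [hm]
  simp only [Matrix.neg_apply]
  rw [show -M 0 0 * z + -M 0 1 = -(M 0 0 * z + M 0 1) by ring,
    show -M 1 0 * z + -M 1 1 = -(M 1 0 * z + M 1 1) by ring, neg_div_neg_eq]

def pact (g : PU11) : ℂ → ℂ :=
  Quotient.liftOn' g (fun A => mobius A) (by
    intro a b hab
    have hab' : a⁻¹ * b ∈ pm1 := QuotientGroup.leftRel_apply.mp hab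
    have key : b = a ∨ b = a * negOne := by
      rcases hab' with h | h
      · left
        have : a⁻¹ * b = 1 := h
        rw [inv_mul_eq_one] at this
        exact this.symm
      · right
        rw [Set.mem_singleton_iff] at h
        rw [inv_mul_eq_iff_eq_mul] at h
        exact h
    funext z
    rcases key with rfl | rfl
    · rfl
    · exact (mobius_mul_negOne a z).symm)

lemma pact_mk (A : SU11) (z : ℂ) : pact (QuotientGroup.mk A : PU11) z = mobius A z := rfl


instance : TopologicalSpace (SpecialLinearGroup (Fin 2) ℂ) :=
  instTopologicalSpaceSubtype

def IsHyperbolic (g : PU11) : Prop :=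
  ∃ A : SU11, (QuotientGroup.mk A : PU11) = g ∧
    (Matrix.trace ((A : SpecialLinearGroup (Fin 2) ℂ) : Matrix (Fin 2) (Fin 2) ℂ)).im = 0 ∧
    2 < |(Matrix.trace ((A : SpecialLinearGroup (Fin 2) ℂ) : Matrix (Fin 2) (Fin 2) ℂ)).re|

def IsAttractor (g : PU11) (z : ℂ) : Prop :=
  ‖z‖ = 1 ∧ ∃ A : SU11, (QuotientGroup.mk A : PU11) = g ∧
    ∃ lam : ℂ, 1 < ‖lam‖ ∧
      ((A : SpecialLinearGroup (Fin 2) ℂ) : Matrix (Fin 2) (Fin 2) ℂ).mulVec ![z, 1]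
        = lam • ![z, 1]

def IsRepeller (g : PU11) (z : ℂ) : Prop :=
  ‖z‖ = 1 ∧ ∃ A : SU11, (QuotientGroup.mk A : PU11) = g ∧
    ∃ lam : ℂ, ‖lam‖ < 1 ∧
      ((A : SpecialLinearGroup (Fin 2) ℂ) : Matrix (Fin 2) (Fin 2) ℂ).mulVec ![z, 1]
        = lam • ![z, 1]

def IsPositiveCycle (l : List ℂ) : Prop :=
  3 ≤ l.length ∧ ∃ t : Fin l.length → ℝ,
    StrictMono t ∧ (∀ j k : Fin l.length, t j - t k < 2 * Real.pi) ∧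
    ∀ j : Fin l.length, l.get j = Complex.exp (Complex.I * (t j : ℂ))

def IsNegativeCycle (l : List ℂ) : Prop :=
  3 ≤ l.length ∧ ∃ t : Fin l.length → ℝ,
    StrictAnti t ∧ (∀ j k : Fin l.length, t j - t k < 2 * Real.pi) ∧
    ∀ j : Fin l.length, l.get j = Complex.exp (Complex.I * (t j : ℂ))

def longRel (n : ℕ) : FreeGroup (ZMod n) :=
  (((List.range n).map (fun k => FreeGroup.of ((k + 1 : ℕ) : ZMod n))).reverse).prod

def Hrels (n : ℕ) : Set (FreeGroup (ZMod n)) :=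
  {x | ∃ i : ZMod n, x = FreeGroup.of i * FreeGroup.of i} ∪ {longRel n}

abbrev H (n : ℕ) := PresentedGroup (Hrels n)

def r (n : ℕ) (i : ZMod n) : H n := PresentedGroup.of i

def pts {n : ℕ} (A : ZMod n → SU11) (p : W) : ℕ → W
  | 0 => p
  | (k+1) => (((A ((k + 1 : ℕ) : ZMod n) : SpecialLinearGroup (Fin 2) ℂ)
      : Matrix (Fin 2) (Fin 2) ℂ)).mulVec (pts A p k)

def IsLift {n : ℕ} (ρ : H n →* PU11) (A : ZMod n → SU11) : Prop :=
  (∀ i : ZMod n, (QuotientGroup.mk (A i) : PU11) = ρ (r n i)) ∧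
  ((((List.range n).map (fun k => A ((k + 1 : ℕ) : ZMod n))).reverse).prod = 1 ∨
   (((List.range n).map (fun k => A ((k + 1 : ℕ) : ZMod n))).reverse).prod = negOne)

def areaRep (n : ℕ) (A : ZMod n → SU11) (c p : W) : ℝ :=
  ∑ i ∈ Finset.range n, triArea c (pts A p (i + 1)) (pts A p (i + 2))

def HasArea {n : ℕ} (ρ : H n →* PU11) (a : ℝ) : Prop :=
  ∀ A : ZMod n → SU11, IsLift ρ A → ∀ c p : W, IsNeg c → IsNeg p → areaRep n A c p = a

def orbitSeq {n : ℕ} (ρ : H n →* PU11) (j : ZMod n) (z : ℂ) : ℕ → ℂ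
  | 0 => z
  | (k+1) => pact (ρ (r n (j + (k : ℕ)))) (orbitSeq ρ j z k)

def iCycle {n : ℕ} (ρ : H n →* PU11) (i : ZMod n) (b e : ℂ) : List ℂ :=
  ((List.range (n - 2)).map (fun k => [orbitSeq ρ (i + 1) b k, orbitSeq ρ (i + 1) e k])).flatten

def IsReflection (g : PU11) (q : W) : Prop :=
  ∃ A : SU11, (QuotientGroup.mk A : PU11) = g ∧
    ∀ x : W, ((A : SpecialLinearGroup (Fin 2) ℂ) : Matrix (Fin 2) (Fin 2) ℂ).mulVec x
      = Complex.I • (x - (2 * herm x q / herm q q) • q)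

def Gsub (n : ℕ) : Subgroup (H n) :=
  Subgroup.closure {x : H n | ∃ i j : ZMod n, x = r n i * r n j}

lemma rr_mem (n : ℕ) (i j : ZMod n) : r n i * r n j ∈ Gsub n :=
  Subgroup.subset_closure ⟨i, j, rfl⟩

lemma rrrr_mem (n : ℕ) (i j k l : ZMod n) :
    r n i * r n j * r n k * r n l ∈ Gsub n := by
  have h : r n i * r n j * r n k * r n l = (r n i * r n j) * (r n k * r n l) := by
    rw [mul_assoc]
  rw [h]
  exact mul_mem (rr_mem n i j) (rr_mem n k l)

def v (n : ℕ) (k : ℕ) : H n :=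
  (((List.range (k % n)).map (fun m => r n ((m + 1 : ℕ) : ZMod n))).reverse).prod

def w0 (n : ℕ) (i : ℕ) : H n := if Even i then v n i else v n i * r n 0

def w (n : ℕ) (j : ℕ) : H n :=
  if j % (2 * n - 2) ≤ n - 2 then w0 n (j % (2 * n - 2))
  else r n 0 * w0 n (j % (2 * n - 2) - (n - 1)) * r n 0

def IsLiftGW {n : ℕ} (ρ : ↥(Gsub n) →* PU11) (u : ℕ → H n) (B : ℕ → SU11) : Prop :=
  ∀ (j : ℕ) (h : u j ∈ Gsub n), (QuotientGroup.mk (B j) : PU11) = ρ ⟨u j, h⟩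

def areaG (n : ℕ) (B : ℕ → SU11) (c p q : W) : ℝ :=
  ∑ j ∈ Finset.range (2 * n - 2),
    triArea c
      (((B j : SpecialLinearGroup (Fin 2) ℂ) : Matrix (Fin 2) (Fin 2) ℂ).mulVec
        (if Even j then p else q))
      (((B ((j + 1) % (2 * n - 2)) : SpecialLinearGroup (Fin 2) ℂ)
          : Matrix (Fin 2) (Fin 2) ℂ).mulVec
        (if Even ((j + 1) % (2 * n - 2)) then p else q))

def HasAreaG {n : ℕ} (ρ : ↥(Gsub n) →* PU11) (a : ℝ) : Prop :=
  ∀ B : ℕ → SU11, IsLiftGW ρ (w n) B →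
    ∀ c p q : W, IsNeg c → IsNeg p → IsNeg q → areaG n B c p q = a

def bigCycle (n : ℕ) (s t s' t' : ZMod n → ℂ) (wd : ℕ → ℂ) : List ℂ :=
  [t 1, s 2, wd 2] ++
  ((List.range (n - 4)).map
    (fun k => [s ((k + 3 : ℕ) : ZMod n), t ((k + 3 : ℕ) : ZMod n), wd (k + 3)])).flatten ++
  [t ((n - 1 : ℕ) : ZMod n), s ((n : ℕ) : ZMod n)] ++
  [s' 2, wd (n + 1)] ++
  ((List.range (n - 4)).map
    (fun k => [s' ((k + 3 : ℕ) : ZMod n), t' ((k + 3 : ℕ) : ZMod n), wd (n + k + 2)])).flatten ++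
  [t' ((n - 1 : ℕ) : ZMod n)]

def IsSE {n : ℕ} (ρ ρ' : H n →* PU11) (i : ZMod n) (t : ℝ) : Prop :=
  IsHyperbolic (ρ (r n i * r n (i - 1))) ∧
  ∃ φ : ℝ → PU11, Continuous φ ∧ (∀ s u : ℝ, φ (s + u) = φ s * φ u) ∧
    IsHyperbolic (φ 1) ∧ φ 1 * φ 1 = ρ (r n i * r n (i - 1)) ∧
    (∀ j : ZMod n, j ≠ i - 1 → j ≠ i → ρ' (r n j) = ρ (r n j)) ∧
    ρ' (r n (i - 1)) = φ t * ρ (r n (i - 1)) * (φ t)⁻¹ ∧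
    ρ' (r n i) = φ t * ρ (r n i) * (φ t)⁻¹

def ConjRep {n : ℕ} (ρ ρ' : H n →* PU11) : Prop :=
  ∃ g : PU11, ∀ h : H n, ρ' h = g * ρ h * g⁻¹

def NormalizedAt {n : ℕ} (ρ : H n →* PU11) (i : ZMod n) : Prop :=
  IsRepeller (ρ (r n i * r n (i - 1))) (-1) ∧
  IsAttractor (ρ (r n i * r n (i - 1))) 1 ∧
  pact (ρ (r n i)) 0 = 0

def PPlus {n : ℕ} (ρ : H n →* PU11) : Prop :=
  Function.Injective ρ ∧ DiscreteTopology (MonoidHom.range ρ) ∧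
  HasArea ρ (((n : ℝ) - 4) * Real.pi)

def tupleAt {n : ℕ} (ρ : H n →* PU11) (i : ZMod n) : List ℂ :=
  (iCycle ρ i (-1) 1).drop 2

def KPlusL (n : ℕ) (l : List ℂ) : Prop :=
  l.length = 2 * n - 6 ∧ (∀ z ∈ l, ‖z‖ = 1 ∧ 0 < z.im) ∧ IsPositiveCycle l

def PrelsList (n : ℕ) : Set (FreeGroup (ZMod n)) :=
  { ((List.range n).map (fun k => FreeGroup.of ((n - k : ℕ) : ZMod n))).prod,
    ((List.range (n / 2)).map (fun k => FreeGroup.of ((n - 2 * k : ℕ) : ZMod n))).prod,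
    ((List.range (n / 2)).map (fun k => FreeGroup.of ((n - 1 - 2 * k : ℕ) : ZMod n))).prod }

abbrev Pgrp (n : ℕ) := PresentedGroup (PrelsList n)

def gp (n : ℕ) (i : ZMod n) : Pgrp n := PresentedGroup.of i

/-!
Lift the points `w_j · (p or q)` of the left-hand cycle to vectors `X j = B j • (p or q)` and put
`M = B 1`. In `H_n` the shift satisfies `S(w_j) · w₁^[j even] = w₁^[j ≥ n-1] · w_{j+1}`, so up
to the signs of the lifts the right-hand cycle is `X 1, …, X (n-1), M X n, …, M X (2n-2)`, where
`M X n = ±X 0` and `M X (n-1) = ±X 1`. That is, it arises from the left-hand polygon by cutting it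
along the diagonal `X 0 X (n-1)` and regluing one piece after moving it by the isometry `M`. The
oriented area of a closed polygon is invariant under isometries and does not depend on the centre
(the cocycle identity for `triArea`), so both areas agree.
-/

open ComplexConjugate

lemma herm_neg_left (x y : W) : herm (-x) y = -herm x y := by
  simp only [herm, Pi.neg_apply]; ring

lemma herm_neg_right (x y : W) : herm x (-y) = -herm x y := by
  simp only [herm, Pi.neg_apply, map_neg]; ring

lemma herm_conj_symm (x y : W) : conj (herm x y) = herm y x := by
  simp only [herm, map_sub, map_mul, conj_conj]; ring

lemma herm_eq_dotProduct (x y : W) : herm x y = star y ⬝ᵥ (Jm *ᵥ x) := by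
  simp only [herm, dotProduct, Pi.star_apply, RCLike.star_def, mulVec, Jm, of_apply, cons_val',
    cons_val_fin_one, Fin.sum_univ_two, cons_val_zero, cons_val_one, one_mul, zero_mul, add_zero,
    neg_mul, zero_add, mul_neg]
  ring

lemma herm_smul (A : SU11) (x y : W) : herm (A • x) (A • y) = herm x y := by
  have hA : ((A : SpecialLinearGroup (Fin 2) ℂ) : Matrix (Fin 2) (Fin 2) ℂ)ᴴ * Jm *
      ((A : SpecialLinearGroup (Fin 2) ℂ) : Matrix (Fin 2) (Fin 2) ℂ) = Jm := A.2
  change herm (_ *ᵥ x) (_ *ᵥ y) = _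
  rw [herm_eq_dotProduct, herm_eq_dotProduct, star_mulVec, ← dotProduct_mulVec, mulVec_mulVec,
    mulVec_mulVec, hA]

lemma IsNeg.smul {x : W} (hx : IsNeg x) (A : SU11) : IsNeg (A • x) :=
  ⟨(smul_ne_zero_iff_ne A).mpr hx.1, by rw [herm_smul]; exact hx.2⟩

/-- With `a, b, c` the norms of `x, y, z`, the real part equals
`1 - a²b²c² - (1 - c²) Re(x ȳ) - (1 - a²) Re(y z̄) - (1 - b²) Re(z x̄)`, and bounding each
`Re(x ȳ) ≤ a b` leaves `(1 - a b)(1 - b c)(1 - c a) > 0`. -/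
lemma re_one_sub_mul_conj_triple_pos {x y z : ℂ} (hx : ‖x‖ < 1) (hy : ‖y‖ < 1)
    (hz : ‖z‖ < 1) :
    0 < ((1 - x * conj y) * (1 - y * conj z) * (1 - z * conj x)).re := by
  have re_le (u v : ℂ) : (u * conj v).re ≤ ‖u‖ * ‖v‖ := by
    simpa only [norm_mul, Complex.norm_conj] using Complex.re_le_norm (u * conj v)
  have expand : ((1 - x * conj y) * (1 - y * conj z) * (1 - z * conj x)).re =
      1 - ‖x‖ ^ 2 * ‖y‖ ^ 2 * ‖z‖ ^ 2 - (1 - ‖z‖ ^ 2) * (x * conj y).re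
        - (1 - ‖x‖ ^ 2) * (y * conj z).re - (1 - ‖y‖ ^ 2) * (z * conj x).re := by
    simp only [← Complex.normSq_eq_norm_sq, Complex.mul_re, Complex.mul_im, Complex.sub_re,
      Complex.sub_im, Complex.one_re, Complex.one_im, Complex.conj_re, Complex.conj_im,
      Complex.normSq_apply]
    ring
  have hx0 := norm_nonneg x
  have hy0 := norm_nonneg y
  have hz0 := norm_nonneg z
  rw [expand]
  nlinarith [mul_le_mul_of_nonneg_left (re_le x y) (by nlinarith : (0 : ℝ) ≤ 1 - ‖z‖ ^ 2),
    mul_le_mul_of_nonneg_left (re_le y z) (by nlinarith : (0 : ℝ) ≤ 1 - ‖x‖ ^ 2),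
    mul_le_mul_of_nonneg_left (re_le z x) (by nlinarith : (0 : ℝ) ≤ 1 - ‖y‖ ^ 2),
    mul_pos (mul_pos (by nlinarith : 0 < 1 - ‖x‖ * ‖y‖) (by nlinarith : 0 < 1 - ‖y‖ * ‖z‖))
      (by nlinarith : 0 < 1 - ‖z‖ * ‖x‖)]

lemma IsNeg.norm_lt {x : W} (hx : IsNeg x) : ‖x 0‖ < ‖x 1‖ := by
  have h := hx.2
  simp only [herm, Complex.sub_re, Complex.mul_conj, Complex.ofReal_re,
    Complex.normSq_eq_norm_sq, sub_neg] at h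
  exact lt_of_pow_lt_pow_left₀ 2 (norm_nonneg _) h

lemma IsNeg.apply_one_ne_zero {x : W} (hx : IsNeg x) : x 1 ≠ 0 :=
  norm_pos_iff.mp ((norm_nonneg _).trans_lt hx.norm_lt)

lemma IsNeg.norm_div_lt_one {x : W} (hx : IsNeg x) : ‖x 0 / x 1‖ < 1 := by
  rw [norm_div, div_lt_one (norm_pos_iff.mpr hx.apply_one_ne_zero)]
  exact hx.norm_lt

lemma herm_eq_mul_chart {x y : W} (hx : x 1 ≠ 0) (hy : y 1 ≠ 0) :
    herm x y = x 1 * conj (y 1) * ((x 0 / x 1) * conj (y 0 / y 1) - 1) := by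
  have hy' : conj (y 1) ≠ 0 := by simpa using hy
  rw [map_div₀]
  field_simp
  simp only [herm]

def hermTriple (a b c : W) : ℂ := -(herm a b * herm b c * herm c a)

lemma triArea_def (a b c : W) : triArea a b c = 2 * arg (hermTriple a b c) := rfl

lemma hermTriple_re_pos {a b c : W} (ha : IsNeg a) (hb : IsNeg b) (hc : IsNeg c) :
    0 < (hermTriple a b c).re := by
  have key : hermTriple a b c =
      ((normSq (a 1) * normSq (b 1) * normSq (c 1) : ℝ) : ℂ) *
        ((1 - (a 0 / a 1) * conj (b 0 / b 1)) * (1 - (b 0 / b 1) * conj (c 0 / c 1)) *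
          (1 - (c 0 / c 1) * conj (a 0 / a 1))) := by
    rw [hermTriple, herm_eq_mul_chart ha.apply_one_ne_zero hb.apply_one_ne_zero,
      herm_eq_mul_chart hb.apply_one_ne_zero hc.apply_one_ne_zero,
      herm_eq_mul_chart hc.apply_one_ne_zero ha.apply_one_ne_zero]
    push_cast
    rw [← Complex.mul_conj (a 1), ← Complex.mul_conj (b 1), ← Complex.mul_conj (c 1)]
    ring
  rw [key, Complex.re_ofReal_mul]
  have := normSq_pos.mpr ha.apply_one_ne_zero
  have := normSq_pos.mpr hb.apply_one_ne_zero
  have := normSq_pos.mpr hc.apply_one_ne_zero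
  exact mul_pos (by positivity) (re_one_sub_mul_conj_triple_pos ha.norm_div_lt_one
    hb.norm_div_lt_one hc.norm_div_lt_one)

lemma herm_ne_zero {a b : W} (ha : IsNeg a) (hb : IsNeg b) : herm a b ≠ 0 := by
  intro h
  simpa [hermTriple, h] using hermTriple_re_pos ha hb hb

lemma arg_mul_of_re_pos {z w : ℂ} (hz : 0 < z.re) (hw : 0 < w.re) :
    arg (z * w) = arg z + arg w := by
  have h₁ := abs_lt.mp (abs_arg_lt_pi_div_two_iff.mpr (Or.inl hz))
  have h₂ := abs_lt.mp (abs_arg_lt_pi_div_two_iff.mpr (Or.inl hw))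
  refine arg_mul (fun h => by simp [h] at hz) (fun h => by simp [h] at hw) ⟨?_, ?_⟩ <;>
    linarith [Real.pi_pos]

lemma triArea_swap {a b c : W} (ha : IsNeg a) (hb : IsNeg b) (hc : IsNeg c) :
    triArea a c b = -triArea a b c := by
  have hconj : hermTriple a c b = conj (hermTriple a b c) := by
    simp only [hermTriple, map_neg, map_mul, herm_conj_symm]
    ring
  have hpi : arg (hermTriple a b c) ≠ Real.pi := fun h =>
    (arg_eq_pi_iff.mp h).1.not_gt (hermTriple_re_pos ha hb hc)
  rw [triArea_def, triArea_def, hconj, arg_conj, if_neg hpi]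
  ring

/-- Both sides are arguments of positive multiples of
`⟨c,d⟩⟨d,u⟩⟨u,v⟩⟨v,c⟩`, by factors `|⟨u,c⟩|²` and `|⟨d,v⟩|²`. -/
lemma triArea_add_triArea {c d u v : W} (hc : IsNeg c) (hd : IsNeg d) (hu : IsNeg u)
    (hv : IsNeg v) :
    triArea c d u + triArea c u v = triArea c d v + triArea d u v := by
  set Q := herm c d * herm d u * herm u v * herm v c
  have hleft : hermTriple c d u * hermTriple c u v = (normSq (herm u c) : ℂ) * Q := by
    rw [Complex.normSq_eq_conj_mul_self, herm_conj_symm]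
    simp only [hermTriple, Q]
    ring
  have hright : hermTriple c d v * hermTriple d u v = (normSq (herm d v) : ℂ) * Q := by
    rw [Complex.normSq_eq_conj_mul_self, herm_conj_symm]
    simp only [hermTriple, Q]
    ring
  have harg : arg (hermTriple c d u) + arg (hermTriple c u v) =
      arg (hermTriple c d v) + arg (hermTriple d u v) := by
    rw [← arg_mul_of_re_pos (hermTriple_re_pos hc hd hu) (hermTriple_re_pos hc hu hv),
      ← arg_mul_of_re_pos (hermTriple_re_pos hc hd hv) (hermTriple_re_pos hd hu hv),
      hleft, hright, arg_real_mul _ (normSq_pos.mpr (herm_ne_zero hu hc)),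
      arg_real_mul _ (normSq_pos.mpr (herm_ne_zero hd hv))]
  simp only [triArea_def]
  linarith

lemma triArea_change_centre {c c' x y : W} (hc : IsNeg c) (hc' : IsNeg c') (hx : IsNeg x)
    (hy : IsNeg y) :
    triArea c' x y = triArea c x y + triArea c c' x - triArea c c' y := by
  linarith [triArea_add_triArea hc hc' hx hy]

lemma triArea_smul (A : SU11) (a b c : W) :
    triArea (A • a) (A • b) (A • c) = triArea a b c := by
  simp only [triArea, herm_smul]

lemma triArea_centre_smul (A : SU11) (c x y : W) :
    triArea c (A • x) (A • y) = triArea (A⁻¹ • c) x y := by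
  rw [← triArea_smul A (A⁻¹ • c), smul_inv_smul]

def EqUpToSign (x y : W) : Prop := x = y ∨ x = -y

lemma EqUpToSign.symm {x y : W} (h : EqUpToSign x y) : EqUpToSign y x := by
  rcases h with rfl | rfl
  exacts [Or.inl rfl, Or.inr (neg_neg y).symm]

lemma EqUpToSign.trans {x y z : W} (h₁ : EqUpToSign x y) (h₂ : EqUpToSign y z) :
    EqUpToSign x z := by
  rcases h₁ with rfl | rfl <;> rcases h₂ with rfl | rfl
  exacts [Or.inl rfl, Or.inr rfl, Or.inr rfl, Or.inl (neg_neg z)]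

lemma triArea_congr {a b b' c c' : W} (hb : EqUpToSign b b') (hc : EqUpToSign c c') :
    triArea a b c = triArea a b' c' := by
  rcases hb with rfl | rfl <;> rcases hc with rfl | rfl <;>
    simp only [triArea, herm_neg_left, herm_neg_right, neg_mul, mul_neg, neg_neg]

def chainArea (c : W) (x : ℕ → W) (a b : ℕ) : ℝ :=
  ∑ j ∈ Finset.Ico a b, triArea c (x j) (x (j + 1))

section chainArea

variable {c : W} {x y : ℕ → W} {a b d : ℕ}

lemma chainArea_add (hab : a ≤ b) (hbd : b ≤ d) :
    chainArea c x a b + chainArea c x b d = chainArea c x a d :=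
  Finset.sum_Ico_consecutive _ hab hbd

lemma chainArea_succ (c : W) (x : ℕ → W) (a : ℕ) :
    chainArea c x a (a + 1) = triArea c (x a) (x (a + 1)) := by
  simp [chainArea]

lemma chainArea_shift (c : W) (x : ℕ → W) (a b : ℕ) :
    chainArea c (fun j => x (j + 1)) a b = chainArea c x (a + 1) (b + 1) :=
  Finset.sum_Ico_add' (fun j => triArea c (x j) (x (j + 1))) a b 1

lemma chainArea_congr (h : ∀ j, a ≤ j → j ≤ b → EqUpToSign (y j) (x j)) :
    chainArea c y a b = chainArea c x a b := by
  refine Finset.sum_congr rfl fun j hj => ?_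
  obtain ⟨hj₁, hj₂⟩ := Finset.mem_Ico.mp hj
  exact triArea_congr (h j hj₁ hj₂.le) (h (j + 1) (by omega) hj₂)

lemma chainArea_smul (A : SU11) (c : W) (x : ℕ → W) (a b : ℕ) :
    chainArea c (fun j => A • x j) a b = chainArea (A⁻¹ • c) x a b := by
  simp only [chainArea, triArea_centre_smul]

lemma chainArea_change_centre {c' : W} (hc : IsNeg c) (hc' : IsNeg c') (hx : ∀ j, IsNeg (x j))
    (hab : a ≤ b) :
    chainArea c' x a b = chainArea c x a b + triArea c c' (x a) - triArea c c' (x b) := by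
  have hsum := Finset.sum_Ico_sub (fun j => triArea c c' (x j)) hab
  simp only [chainArea, triArea_change_centre hc hc' (hx _) (hx _), Finset.sum_sub_distrib,
    Finset.sum_add_distrib] at hsum ⊢
  linarith

end chainArea

/-- `Z` is the polygon `X` cut along the diagonal `X 0 X k`, with the piece `X k, …, X m` moved by
`M` so that its edge `X k X (k+1)` lands on the edge `X 1 X 0`. -/
lemma chainArea_cut_reglue {c : W} {X Z : ℕ → W} {M : SU11} {k m : ℕ} (hc : IsNeg c)
    (hX : ∀ j, IsNeg (X j)) (hk : 1 ≤ k) (hkm : k < m) (hXm : X m = X 0) (hZm : Z m = Z 0)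
    (hZ : ∀ j < m, EqUpToSign (Z j) ((if j < k then 1 else M) • X (j + 1)))
    (hM₀ : EqUpToSign (M • X (k + 1)) (X 0)) (hM₁ : EqUpToSign (M • X k) (X 1)) :
    chainArea c Z 0 m = chainArea c X 0 m := by
  set c' := M⁻¹ • c
  have hc' : IsNeg c' := hc.smul _
  have hZ₁ (j : ℕ) (hj : j < k) : EqUpToSign (Z j) (X (j + 1)) := by
    simpa [hj] using hZ j (by omega)
  have hZ₂ (j : ℕ) (hj₁ : k ≤ j) (hj₂ : j < m) : EqUpToSign (Z j) (M • X (j + 1)) := by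
    simpa [hj₁.not_gt] using hZ j hj₂
  obtain ⟨k, rfl⟩ := Nat.exists_eq_add_of_le' hk
  obtain ⟨m, rfl⟩ := Nat.exists_eq_add_of_le' (hk.trans hkm.le)
  have first : chainArea c Z 0 k = chainArea c X 1 (k + 1) := by
    rw [← chainArea_shift]
    exact chainArea_congr fun j _ hj => hZ₁ j (by omega)
  have diagonal : chainArea c Z k (k + 1) = triArea c (X (k + 1)) (X 0) := by
    rw [chainArea_succ]
    exact triArea_congr (hZ₁ k (by omega)) ((hZ₂ _ le_rfl hkm).trans hM₀)
  have second : chainArea c Z (k + 1) m = chainArea c' X (k + 2) (m + 1) := by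
    rw [← chainArea_smul, ← chainArea_shift]
    exact chainArea_congr fun j hj₁ hj₂ => hZ₂ j (by omega) (by omega)
  have closing : chainArea c Z m (m + 1) = triArea c' (X 0) (X (k + 1)) := by
    rw [chainArea_succ, ← triArea_centre_smul, ← hXm, hZm]
    exact triArea_congr (hZ₂ m (by omega) (by omega)) ((hZ₁ 0 (by omega)).trans hM₁.symm)
  have moved_edge : triArea c (X 0) (X 1) = triArea c' (X (k + 2)) (X (k + 1)) := by
    rw [← triArea_centre_smul]
    exact triArea_congr hM₀.symm hM₁.symm
  have hZsplit : chainArea c Z 0 (m + 1) = chainArea c Z 0 k + chainArea c Z k (k + 1)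
      + chainArea c Z (k + 1) m + chainArea c Z m (m + 1) := by
    rw [chainArea_add (by omega) (by omega), chainArea_add (by omega) (by omega),
      chainArea_add (by omega) (by omega)]
  have hXsplit : chainArea c X 0 (m + 1) = chainArea c X 0 1 + chainArea c X 1 (k + 1)
      + chainArea c X (k + 1) (k + 2) + chainArea c X (k + 2) (m + 1) := by
    rw [chainArea_add (by omega) (by omega), chainArea_add (by omega) (by omega),
      chainArea_add (by omega) (by omega)]
  rw [hZsplit, hXsplit, first, diagonal, second, closing, chainArea_succ, chainArea_succ,
    moved_edge, chainArea_change_centre hc hc' hX (by omega), hXm,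
    triArea_change_centre hc hc' (hX 0) (hX _), triArea_change_centre hc hc' (hX _) (hX _),
    triArea_swap hc (hX 0) (hX (k + 1)), triArea_swap hc (hX (k + 1)) (hX (k + 2))]
  ring

section Presentation

variable {n : ℕ}

lemma mk_eq_one_of_mem_Hrels {x : FreeGroup (ZMod n)} (h : x ∈ Hrels n) :
    PresentedGroup.mk (Hrels n) x = 1 :=
  (QuotientGroup.eq_one_iff x).mpr (Subgroup.subset_normalClosure h)

@[simp]
lemma r_mul_self (i : ZMod n) : r n i * r n i = 1 := by
  have h := mk_eq_one_of_mem_Hrels (Or.inl ⟨i, rfl⟩ : FreeGroup.of i * FreeGroup.of i ∈ Hrels n)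
  rwa [map_mul] at h

@[simp]
lemma r_mul_r_mul (i : ZMod n) (x : H n) : r n i * (r n i * x) = x := by
  rw [← mul_assoc, r_mul_self, one_mul]

lemma r_inv (i : ZMod n) : (r n i)⁻¹ = r n i :=
  inv_eq_of_mul_eq_one_right (r_mul_self i)

lemma v_zero : v n 0 = 1 := by
  simp [v]

lemma v_succ {k : ℕ} (h : k + 1 < n) : v n (k + 1) = r n ((k + 1 : ℕ) : ZMod n) * v n k := by
  rw [v, v, Nat.mod_eq_of_lt h, Nat.mod_eq_of_lt (by omega), List.range_succ]
  simp

lemma v_one (hn : 2 ≤ n) : v n 1 = r n 1 := by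
  simpa [v_zero] using v_succ (n := n) (k := 0) (by omega)

lemma v_pred (hn : 1 ≤ n) : v n (n - 1) = r n 0 := by
  have hrel := mk_eq_one_of_mem_Hrels (Or.inr rfl : longRel n ∈ Hrels n)
  obtain ⟨k, rfl⟩ := Nat.exists_eq_add_of_le' hn
  rw [longRel, ← List.prod_hom _ (PresentedGroup.mk (Hrels (k + 1))), List.range_succ] at hrel
  simp only [List.map_append, List.map_cons, List.map_nil, List.reverse_append,
    List.reverse_cons, List.reverse_nil, List.nil_append, List.singleton_append, List.prod_cons,
    List.map_reverse, List.map_map, ZMod.natCast_self] at hrel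
  rw [v, Nat.add_sub_cancel, Nat.mod_eq_of_lt (by omega), ← r_inv]
  exact eq_inv_of_mul_eq_one_right hrel

end Presentation

section Shift

variable {n : ℕ} {S : MulAut (H n)}

lemma shift_v (hS : ∀ i : ZMod n, S (r n i) = r n (i + 1)) {k : ℕ} (hk : k + 1 < n) :
    S (v n k) = v n (k + 1) * r n 1 := by
  induction k with
  | zero => rw [v_zero, map_one, v_one (by omega), r_mul_self]
  | succ k ih =>
    rw [v_succ (by omega), map_mul, hS, ih (by omega), v_succ hk, v_succ (by omega)]
    push_cast
    simp only [mul_assoc]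

lemma w0_zero : w0 n 0 = 1 := by
  simp [w0, v_zero]

lemma w0_one (hn : 2 ≤ n) : w0 n 1 = r n 1 * r n 0 := by
  simp [w0, v_one hn]

lemma w0_add_two {i : ℕ} (hi : i + 2 < n) :
    w0 n (i + 2) = r n ((i + 2 : ℕ) : ZMod n) * r n ((i + 1 : ℕ) : ZMod n) * w0 n i := by
  simp only [w0, Nat.even_add, even_two, iff_true, v_succ hi, v_succ (by omega : i + 1 < n)]
  split_ifs <;> simp only [mul_assoc]

lemma w0_pred (hn : 1 ≤ n) (heven : Even n) : w0 n (n - 1) = 1 := by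
  have hodd : ¬ Even (n - 1) := by rw [Nat.even_sub hn]; simp [heven]
  simp [w0, hodd, v_pred hn]

lemma shift_w0 (hS : ∀ i : ZMod n, S (r n i) = r n (i + 1)) {i : ℕ} (hi : i + 1 < n) :
    S (w0 n i) * (if Even i then w0 n 1 else 1) = w0 n (i + 1) := by
  by_cases hev : Even i
  · have hodd : ¬ Even (i + 1) := by simp [Nat.even_add_one, hev]
    rw [if_pos hev, w0_one (by omega)]
    simp [w0, hev, hodd, shift_v hS hi, mul_assoc]
  · have heven' : Even (i + 1) := by simpa [Nat.even_add_one] using hev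
    simp [w0, hev, heven', shift_v hS hi, hS, mul_assoc]

end Shift

section Gsub

variable {n : ℕ}

lemma Gsub_le_comap {f : H n →* H n} (hf : ∀ i j, f (r n i * r n j) ∈ Gsub n) :
    Gsub n ≤ (Gsub n).comap f :=
  (Subgroup.closure_le _).mpr fun _ ⟨i, j, hx⟩ => hx ▸ hf i j

lemma shift_mem_Gsub {S : MulAut (H n)} (hS : ∀ i : ZMod n, S (r n i) = r n (i + 1)) {x : H n}
    (hx : x ∈ Gsub n) : S x ∈ Gsub n :=
  Gsub_le_comap (f := S.toMonoidHom) (fun i j => by simpa [hS] using rr_mem n _ _) hx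

lemma r_zero_mul_mul_r_zero_mem_Gsub {x : H n} (hx : x ∈ Gsub n) :
    r n 0 * x * r n 0 ∈ Gsub n := by
  have key := Gsub_le_comap (f := (MulAut.conj (r n 0)).toMonoidHom)
    (fun i j => by simpa [r_inv, mul_assoc] using rrrr_mem n 0 i j 0) hx
  simpa [r_inv] using key

lemma w0_mem : ∀ {i : ℕ}, i < n → w0 n i ∈ Gsub n
  | 0, _ => w0_zero (n := n) ▸ one_mem _
  | 1, h => w0_one h ▸ rr_mem n 1 0
  | i + 2, h => (w0_add_two h).symm ▸ mul_mem (rr_mem n _ _) (w0_mem (by omega))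

lemma w_zero : w n 0 = 1 := by
  simp [w, w0_zero]

lemma w_mod (j : ℕ) : w n (j % (2 * n - 2)) = w n j := by
  simp only [w, Nat.mod_mod]

variable (hn : 2 ≤ n) (heven : Even n)
include hn

lemma w_mem (j : ℕ) : w n j ∈ Gsub n := by
  have := Nat.mod_lt j (by omega : 0 < 2 * n - 2)
  unfold w
  split_ifs
  · exact w0_mem (by omega)
  · exact r_zero_mul_mul_r_zero_mem_Gsub (w0_mem (by omega))

include heven

lemma w_of_lt {j : ℕ} (hj : j < n) : w n j = w0 n j := by
  unfold w
  rw [Nat.mod_eq_of_lt (by omega)]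
  split_ifs with h
  · rfl
  · rw [show j = n - 1 by omega, Nat.sub_self, w0_zero, w0_pred (by omega) heven]
    simp

lemma w_of_le_of_le {j : ℕ} (hj₁ : n - 1 ≤ j) (hj₂ : j ≤ 2 * n - 2) :
    w n j = r n 0 * w0 n (j - (n - 1)) * r n 0 := by
  rcases hj₂.lt_or_eq with hj₂ | rfl
  · rw [w, Nat.mod_eq_of_lt hj₂, if_neg (by omega)]
  · rw [w, Nat.mod_self, if_pos (Nat.zero_le _), show 2 * n - 2 - (n - 1) = n - 1 by omega,
      w0_pred (by omega) heven, w0_zero]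
    simp

lemma w_one : w n 1 = r n 1 * r n 0 := by
  rw [w_of_lt hn heven (by omega), w0_one hn]

lemma w_pred : w n (n - 1) = 1 := by
  rw [w_of_lt hn heven (by omega), w0_pred (by omega) heven]

lemma w_one_mul_w_self : w n 1 * w n n = 1 := by
  rw [w_one hn heven, w_of_le_of_le hn heven (by omega) (by omega),
    show n - (n - 1) = 1 by omega, w0_one hn]
  simp [mul_assoc]

lemma shift_w {S : MulAut (H n)} (hS : ∀ i : ZMod n, S (r n i) = r n (i + 1)) {j : ℕ}
    (hj : j < 2 * n - 2) :
    S (w n j) * (if Even j then w n 1 else 1) = (if j < n - 1 then 1 else w n 1) * w n (j + 1) := by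
  by_cases hlow : j < n - 1
  · rw [if_pos hlow, one_mul, w_of_lt hn heven (j := j) (by omega),
      w_of_lt hn heven (j := j + 1) (by omega), w_of_lt hn heven (j := 1) (by omega),
      shift_w0 hS (by omega)]
  · obtain ⟨i, rfl⟩ : ∃ i, j = i + (n - 1) := ⟨j - (n - 1), by omega⟩
    have hw0 := shift_w0 hS (i := i) (by omega)
    have hpar : Even (i + (n - 1)) ↔ ¬ Even i := by
      rw [Nat.even_add, Nat.even_sub (by omega)]
      simp [heven]
    rw [if_neg hlow, w_one hn heven,
      w_of_le_of_le hn heven (j := i + (n - 1)) (by omega) (by omega),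
      w_of_le_of_le hn heven (j := i + (n - 1) + 1) (by omega) (by omega),
      show i + (n - 1) + 1 - (n - 1) = i + 1 by omega, Nat.add_sub_cancel, ← hw0, w0_one hn]
    by_cases hi : Even i <;> simp [hi, hpar, hS, mul_assoc]

end Gsub

lemma negOne_smul (x : W) : negOne • x = -x := by
  change ((-1 : SpecialLinearGroup (Fin 2) ℂ) : Matrix (Fin 2) (Fin 2) ℂ) *ᵥ x = -x
  simp [Matrix.neg_mulVec]

lemma smul_eqUpToSign_of_mk_eq {A C : SU11}
    (h : (QuotientGroup.mk A : PU11) = QuotientGroup.mk C) (x : W) :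
    EqUpToSign (A • x) (C • x) := by
  rcases QuotientGroup.eq.mp h with h | h
  · rw [inv_mul_eq_one.mp h]
    exact Or.inl rfl
  · rw [Set.mem_singleton_iff, inv_mul_eq_iff_eq_mul] at h
    rw [h, mul_smul, negOne_smul, smul_neg]
    exact Or.inr (neg_neg _).symm

lemma mul_smul_eqUpToSign_of_lift {Γ : Type*} [Group Γ] (ρ : Γ →* PU11) {a b c d : SU11}
    {x y z t : Γ} (ha : (QuotientGroup.mk a : PU11) = ρ x)
    (hb : (QuotientGroup.mk b : PU11) = ρ y) (hc : (QuotientGroup.mk c : PU11) = ρ z)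
    (hd : (QuotientGroup.mk d : PU11) = ρ t) (h : x * y = z * t) (v : W) :
    EqUpToSign ((a * b) • v) ((c * d) • v) := by
  refine smul_eqUpToSign_of_mk_eq ?_ v
  rw [QuotientGroup.mk_mul, QuotientGroup.mk_mul, ha, hb, hc, hd, ← map_mul, ← map_mul, h]

lemma mk_one_eq_map_one {Γ : Type*} [Group Γ] (ρ : Γ →* PU11) :
    (QuotientGroup.mk (1 : SU11) : PU11) = ρ 1 :=
  (QuotientGroup.mk_one pm1).trans (map_one ρ).symm

def vertex (n : ℕ) (B : ℕ → SU11) (p q : W) (j : ℕ) : W :=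
  B (j % (2 * n - 2)) • (if Even (j % (2 * n - 2)) then p else q)

section vertex

variable {n : ℕ} {B : ℕ → SU11} {p q : W}

lemma vertex_eq (j : ℕ) :
    vertex n B p q j = B (j % (2 * n - 2)) • (if Even j then p else q) := by
  have hpar : Even (j % (2 * n - 2)) ↔ Even j := by
    simp only [Nat.even_iff, Nat.mod_mod_of_dvd _ (⟨n - 1, by omega⟩ : 2 ∣ 2 * n - 2)]
  simp only [vertex, hpar]

lemma vertex_period : vertex n B p q (2 * n - 2) = vertex n B p q 0 := by
  simp [vertex]

lemma IsNeg.vertex (hp : IsNeg p) (hq : IsNeg q) (j : ℕ) : IsNeg (vertex n B p q j) := by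
  unfold HView.vertex
  split_ifs
  exacts [hp.smul _, hq.smul _]

lemma areaG_eq_chainArea (c : W) :
    areaG n B c p q = chainArea c (vertex n B p q) 0 (2 * n - 2) := by
  rw [areaG, chainArea, Finset.range_eq_Ico]
  refine Finset.sum_congr rfl fun j hj => ?_
  rw [vertex, vertex, Nat.mod_eq_of_lt (Finset.mem_Ico.mp hj).2]
  rfl

variable {ρ : ↥(Gsub n) →* PU11} (hn : 2 ≤ n) (heven : Even n) (hB : IsLiftGW ρ (w n) B)
include hn heven hB

lemma smul_vertex_self : EqUpToSign (B 1 • vertex n B p q n) (vertex n B p q 0) := by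
  have h := mul_smul_eqUpToSign_of_lift ρ (hB 1 (w_mem hn 1))
    (hB (n % (2 * n - 2)) (w_mem hn _)) (hB 0 (w_mem hn 0)) (mk_one_eq_map_one ρ)
    (Subtype.ext (by simp [w_mod, w_one_mul_w_self hn heven, w_zero])) p
  simpa [vertex_eq, heven, mul_smul] using h

lemma smul_vertex_pred : EqUpToSign (B 1 • vertex n B p q (n - 1)) (vertex n B p q 1) := by
  have hodd : ¬ Even (n - 1) := by rw [Nat.even_sub (by omega)]; simp [heven]
  have h := mul_smul_eqUpToSign_of_lift ρ (hB 1 (w_mem hn 1))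
    (hB ((n - 1) % (2 * n - 2)) (w_mem hn _)) (hB 1 (w_mem hn 1)) (mk_one_eq_map_one ρ)
    (Subtype.ext (by simp [w_mod, w_pred hn heven])) q
  simpa [vertex_eq, hodd, mul_smul, Nat.mod_eq_of_lt (by omega : 1 < 2 * n - 2)] using h

lemma vertex_shift {S : MulAut (H n)} (hS : ∀ i : ZMod n, S (r n i) = r n (i + 1))
    {B' : ℕ → SU11} (hB' : IsLiftGW ρ (fun j => S (w n j)) B') {j : ℕ} (hj : j < 2 * n - 2) :
    EqUpToSign (vertex n B' (B 1 • q) p j)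
      ((if j < n - 1 then 1 else B 1) • vertex n B p q (j + 1)) := by
  have hε : (QuotientGroup.mk (if Even j then B 1 else 1) : PU11) =
      ρ ⟨if Even j then w n 1 else 1, by split_ifs; exacts [w_mem hn 1, one_mem _]⟩ := by
    split_ifs
    exacts [hB 1 _, mk_one_eq_map_one ρ]
  have hδ : (QuotientGroup.mk (if j < n - 1 then 1 else B 1) : PU11) =
      ρ ⟨if j < n - 1 then 1 else w n 1, by split_ifs; exacts [one_mem _, w_mem hn 1]⟩ := by
    split_ifs
    exacts [mk_one_eq_map_one ρ, hB 1 _]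
  have h := mul_smul_eqUpToSign_of_lift ρ (hB' j (shift_mem_Gsub hS (w_mem hn j))) hε hδ
    (hB ((j + 1) % (2 * n - 2)) (w_mem hn _))
    (Subtype.ext (by simpa [w_mod] using shift_w hn heven hS hj)) (if Even (j + 1) then p else q)
  have hZ : B' j • (if Even j then B 1 • q else p) =
      (B' j * if Even j then B 1 else 1) • (if Even (j + 1) then p else q) := by
    by_cases hev : Even j <;> simp [hev, Nat.even_add_one, mul_smul]
  rwa [vertex_eq, vertex_eq, Nat.mod_eq_of_lt hj, ← mul_smul, hZ]

end vertex

/-- `Area_n(p, q; ρ) = Area_1(w₁·q, p; ρ)`. -/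
theorem areaG_shift (n : ℕ) (hn : 6 ≤ n) (heven : Even n)
    (ρ : ↥(Gsub n) →* PU11)
    (S : MulAut (H n)) (hS : ∀ i : ZMod n, S (r n i) = r n (i + 1))
    (B B' : ℕ → SU11) (hB : IsLiftGW ρ (w n) B)
    (hB' : IsLiftGW ρ (fun j => S (w n j)) B')
    (c p q : W) (hc : IsNeg c) (hp : IsNeg p) (hq : IsNeg q) :
    areaG n B c p q =
      areaG n B' c
        (((B 1 : SpecialLinearGroup (Fin 2) ℂ) : Matrix (Fin 2) (Fin 2) ℂ).mulVec q) p := by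
  have hn₂ : 2 ≤ n := by omega
  have hself : EqUpToSign (B 1 • vertex n B p q (n - 1 + 1)) (vertex n B p q 0) := by
    rw [Nat.sub_add_cancel (by omega)]
    exact smul_vertex_self hn₂ heven hB
  change _ = areaG n B' c (B 1 • q) p
  rw [areaG_eq_chainArea, areaG_eq_chainArea]
  exact (chainArea_cut_reglue hc (IsNeg.vertex hp hq) (k := n - 1) (by omega) (by omega)
    vertex_period vertex_period (fun j hj => vertex_shift hn₂ heven hB hS hB' hj) hself
    (smul_vertex_pred hn₂ heven hB)).symm

end HView
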